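/- Assume the uniform-deviation hypothesis, the empirical diversity condition, I* ≠ ∅, and conditional-mean realizability. Then for every empirical FAIRM solution (ŵ, Φ̂): max_{e∈E} E[|E[y^e | σ(ŵ(Φ̂(x^e)))] − ŵ(Φ̂(x^e))|] ≤ √(4ρ_1 + 2ρ_2); that is, the multi-calibration error of the empirical FAIRM prediction rule is at most √(4ρ_1 + 2ρ_2) in every environment. -/

import Mathlib

/-!
An empirically feasible `Φ̂` is invariant: by the uniform deviation bound its population moments
differ by at most `2ρ₁`, `2ρ₂` across training environments, which the empirical diversity
condition rules out for non-invariant maps. Let `w` realize the conditional mean `E[y | Φ̂]`.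
Comparing the empirical loss of `(ŵ, Φ̂)` with that of `(w, Φ̂)` in some training environment and
passing to population moments gives `R(ŵ ∘ Φ̂) - R(w ∘ Φ̂) ≤ 2ρ₁ + ρ₂` there, and invariance of the
moments carries this to every environment. By Pythagoras this risk gap is `E[(w ∘ Φ̂ - ŵ ∘ Φ̂)²]`,
and as `σ(ŵ ∘ Φ̂) ⊆ σ(Φ̂)` the tower property bounds the calibration error by
`E|w ∘ Φ̂ - ŵ ∘ Φ̂| ≤ √(2ρ₁ + ρ₂)`.
-/

open MeasureTheory

noncomputable section

/-- `E[u(Φ(x^e)) * y^e]`, the covariance-type moment in environment `e`. -/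
def covT {p q : ℕ} {E : Type} (P : E → Measure ((Fin p → ℝ) × ℝ))
    (Φ : (Fin p → ℝ) → (Fin q → ℝ)) (u : (Fin q → ℝ) → ℝ) (e : E) : ℝ :=
  ∫ z, u (Φ z.1) * z.2 ∂(P e)

/-- `E[(u(Φ(x^e)))²]`, the second-moment term in environment `e`. -/
def sqT {p q : ℕ} {E : Type} (P : E → Measure ((Fin p → ℝ) × ℝ))
    (Φ : (Fin p → ℝ) → (Fin q → ℝ)) (u : (Fin q → ℝ) → ℝ) (e : E) : ℝ :=
  ∫ z, (u (Φ z.1)) ^ 2 ∂(P e)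

/-- The risk `R^e(f) = E[(y^e - f(x^e))²]`. -/
def risk {p : ℕ} {E : Type} (P : E → Measure ((Fin p → ℝ) × ℝ))
    (f : (Fin p → ℝ) → ℝ) (e : E) : ℝ :=
  ∫ z, (z.2 - f z.1) ^ 2 ∂(P e)

/-- The set `I*` of invariant representations. -/
def InvSet {p q : ℕ} {E : Type} (P : E → Measure ((Fin p → ℝ) × ℝ))
    (FΦ : Set ((Fin p → ℝ) → (Fin q → ℝ))) (Fw : Set ((Fin q → ℝ) → ℝ)) :
    Set ((Fin p → ℝ) → (Fin q → ℝ)) :=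
  {Φ | Φ ∈ FΦ ∧ ∀ u ∈ Fw, ∀ e e' : E,
    covT P Φ u e = covT P Φ u e' ∧ sqT P Φ u e = sqT P Φ u e'}

/-- The training-feasible set `I_tr`. -/
def TrFeas {p q : ℕ} {E : Type} (P : E → Measure ((Fin p → ℝ) × ℝ)) (Etr : Finset E)
    (FΦ : Set ((Fin p → ℝ) → (Fin q → ℝ))) (Fw : Set ((Fin q → ℝ) → ℝ)) :
    Set ((Fin p → ℝ) → (Fin q → ℝ)) :=
  {Φ | Φ ∈ FΦ ∧ ∀ u ∈ Fw, ∀ e ∈ Etr, ∀ e' ∈ Etr,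
    covT P Φ u e = covT P Φ u e' ∧ sqT P Φ u e = sqT P Φ u e'}

/-- Diversity condition on the training environments. -/
def Diversity {p q : ℕ} {E : Type} (P : E → Measure ((Fin p → ℝ) × ℝ)) (Etr : Finset E)
    (FΦ : Set ((Fin p → ℝ) → (Fin q → ℝ))) (Fw : Set ((Fin q → ℝ) → ℝ)) : Prop :=
  ∀ Φ ∈ FΦ, Φ ∉ InvSet P FΦ Fw → ∃ u ∈ Fw, ∃ e ∈ Etr, ∃ e' ∈ Etr,
    covT P Φ u e ≠ covT P Φ u e' ∨ sqT P Φ u e ≠ sqT P Φ u e'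

/-- Regularity: measurability and finiteness of all relevant expectations. -/
def Regular {p q : ℕ} {E : Type} (P : E → Measure ((Fin p → ℝ) × ℝ))
    (FΦ : Set ((Fin p → ℝ) → (Fin q → ℝ))) (Fw : Set ((Fin q → ℝ) → ℝ)) : Prop :=
  (∀ Φ ∈ FΦ, Measurable Φ) ∧ (∀ w ∈ Fw, Measurable w) ∧
  (∀ e : E, MemLp (fun z : (Fin p → ℝ) × ℝ => z.2) 2 (P e)) ∧
  (∀ (e : E) (j : Fin p), MemLp (fun z : (Fin p → ℝ) × ℝ => z.1 j) 2 (P e)) ∧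
  (∀ Φ ∈ FΦ, ∀ u ∈ Fw, ∀ e : E,
    Integrable (fun z : (Fin p → ℝ) × ℝ => u (Φ z.1) * z.2) (P e) ∧
    Integrable (fun z : (Fin p → ℝ) × ℝ => (u (Φ z.1)) ^ 2) (P e) ∧
    Integrable (fun z : (Fin p → ℝ) × ℝ => (z.2 - u (Φ z.1)) ^ 2) (P e))

/-- A FAIRM solution: minimizer of the weighted training risk over `F_w × I_tr`. -/
def IsFairmSol {p q : ℕ} {E : Type} (P : E → Measure ((Fin p → ℝ) × ℝ)) (Etr : Finset E)
    (FΦ : Set ((Fin p → ℝ) → (Fin q → ℝ))) (Fw : Set ((Fin q → ℝ) → ℝ)) (α : E → ℝ)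
    (w : (Fin q → ℝ) → ℝ) (Φ : (Fin p → ℝ) → (Fin q → ℝ)) : Prop :=
  w ∈ Fw ∧ Φ ∈ TrFeas P Etr FΦ Fw ∧
  ∀ w' ∈ Fw, ∀ Φ' ∈ TrFeas P Etr FΦ Fw,
    ∑ e ∈ Etr, α e * risk P (fun x => w (Φ x)) e ≤
      ∑ e ∈ Etr, α e * risk P (fun x => w' (Φ' x)) e

/-- A full-information FAIRM solution: minimizer of the weighted risk over `F_w × I*`. -/
def IsFullSol {p q : ℕ} {E : Type} [Fintype E] (P : E → Measure ((Fin p → ℝ) × ℝ))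
    (FΦ : Set ((Fin p → ℝ) → (Fin q → ℝ))) (Fw : Set ((Fin q → ℝ) → ℝ)) (αs : E → ℝ)
    (w : (Fin q → ℝ) → ℝ) (Φ : (Fin p → ℝ) → (Fin q → ℝ)) : Prop :=
  w ∈ Fw ∧ Φ ∈ InvSet P FΦ Fw ∧
  ∀ w' ∈ Fw, ∀ Φ' ∈ InvSet P FΦ Fw,
    ∑ e : E, αs e * risk P (fun x => w (Φ x)) e ≤
      ∑ e : E, αs e * risk P (fun x => w' (Φ' x)) e

/-- The σ-algebra generated by a random variable `Z` on `(Fin p → ℝ) × ℝ`. -/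
def sigmaGen {p : ℕ} {β : Type*} [MeasurableSpace β] (Z : (Fin p → ℝ) × ℝ → β) :
    MeasurableSpace ((Fin p → ℝ) × ℝ) :=
  MeasurableSpace.comap Z inferInstance

/-- Conditional-mean realizability: every invariant representation admits a
conditional-mean function in `F_w`, uniformly over environments. -/
def CMR {p q : ℕ} {E : Type} (P : E → Measure ((Fin p → ℝ) × ℝ))
    (FΦ : Set ((Fin p → ℝ) → (Fin q → ℝ))) (Fw : Set ((Fin q → ℝ) → ℝ)) : Prop :=
  ∀ Φ ∈ InvSet P FΦ Fw, ∃ w ∈ Fw, ∀ e : E,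
    (P e)[(fun z : (Fin p → ℝ) × ℝ => z.2) | sigmaGen (fun z => Φ z.1)]
      =ᵐ[P e] fun z => w (Φ z.1)

/-- Empirical covariance-type moment `n_e⁻¹ Σ_i u(Φ(x_i^e))·y_i^e`. -/
def empCov {p q : ℕ} {E : Type} (n : E → ℕ)
    (X : (e : E) → Fin (n e) → (Fin p → ℝ)) (Y : (e : E) → Fin (n e) → ℝ)
    (Φ : (Fin p → ℝ) → (Fin q → ℝ)) (u : (Fin q → ℝ) → ℝ) (e : E) : ℝ :=
  (∑ i, u (Φ (X e i)) * Y e i) / (n e : ℝ)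

/-- Empirical second moment `n_e⁻¹ Σ_i u(Φ(x_i^e))²`. -/
def empSq {p q : ℕ} {E : Type} (n : E → ℕ)
    (X : (e : E) → Fin (n e) → (Fin p → ℝ))
    (Φ : (Fin p → ℝ) → (Fin q → ℝ)) (u : (Fin q → ℝ) → ℝ) (e : E) : ℝ :=
  (∑ i, (u (Φ (X e i))) ^ 2) / (n e : ℝ)

/-- Uniform-deviation hypothesis with levels `ρ₁/2` and `ρ₂/2`. -/
def UnifDev {p q : ℕ} {E : Type} (P : E → Measure ((Fin p → ℝ) × ℝ)) (Etr : Finset E)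
    (FΦ : Set ((Fin p → ℝ) → (Fin q → ℝ))) (Fw : Set ((Fin q → ℝ) → ℝ))
    (n : E → ℕ) (X : (e : E) → Fin (n e) → (Fin p → ℝ)) (Y : (e : E) → Fin (n e) → ℝ)
    (ρ1 ρ2 : ℝ) : Prop :=
  ∀ u ∈ Fw, ∀ Φ ∈ FΦ, ∀ e ∈ Etr,
    |empCov n X Y Φ u e - covT P Φ u e| ≤ ρ1 / 2 ∧
    |empSq n X Φ u e - sqT P Φ u e| ≤ ρ2 / 2

/-- Empirical diversity condition. -/
def EmpDiv {p q : ℕ} {E : Type} (P : E → Measure ((Fin p → ℝ) × ℝ)) (Etr : Finset E)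
    (FΦ : Set ((Fin p → ℝ) → (Fin q → ℝ))) (Fw : Set ((Fin q → ℝ) → ℝ))
    (ρ1 ρ2 : ℝ) : Prop :=
  ∀ Φ ∈ FΦ, Φ ∉ InvSet P FΦ Fw → ∃ u ∈ Fw, ∃ e ∈ Etr, ∃ e' ∈ Etr,
    2 * ρ1 < |covT P Φ u e - covT P Φ u e'| ∨ 2 * ρ2 < |sqT P Φ u e - sqT P Φ u e'|

/-- The empirically feasible set. -/
def EmpFeas {p q : ℕ} {E : Type} (Etr : Finset E)
    (FΦ : Set ((Fin p → ℝ) → (Fin q → ℝ))) (Fw : Set ((Fin q → ℝ) → ℝ))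
    (n : E → ℕ) (X : (e : E) → Fin (n e) → (Fin p → ℝ)) (Y : (e : E) → Fin (n e) → ℝ)
    (ρ1 ρ2 : ℝ) : Set ((Fin p → ℝ) → (Fin q → ℝ)) :=
  {Φ | Φ ∈ FΦ ∧ ∀ u ∈ Fw, ∀ e ∈ Etr, ∀ e' ∈ Etr,
    |empCov n X Y Φ u e - empCov n X Y Φ u e'| ≤ ρ1 ∧
    |empSq n X Φ u e - empSq n X Φ u e'| ≤ ρ2}

/-- An empirical FAIRM solution: minimizer of the empirical squared loss over
`F_w ×` (the empirically feasible set). -/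
def IsEmpFairmSol {p q : ℕ} {E : Type} (Etr : Finset E)
    (FΦ : Set ((Fin p → ℝ) → (Fin q → ℝ))) (Fw : Set ((Fin q → ℝ) → ℝ))
    (n : E → ℕ) (X : (e : E) → Fin (n e) → (Fin p → ℝ)) (Y : (e : E) → Fin (n e) → ℝ)
    (ρ1 ρ2 : ℝ)
    (w : (Fin q → ℝ) → ℝ) (Φ : (Fin p → ℝ) → (Fin q → ℝ)) : Prop :=
  w ∈ Fw ∧ Φ ∈ EmpFeas Etr FΦ Fw n X Y ρ1 ρ2 ∧
  ∀ w' ∈ Fw, ∀ Φ' ∈ EmpFeas Etr FΦ Fw n X Y ρ1 ρ2,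
    ∑ e ∈ Etr, ∑ i, (Y e i - w (Φ (X e i))) ^ 2 ≤
      ∑ e ∈ Etr, ∑ i, (Y e i - w' (Φ' (X e i))) ^ 2


open ProbabilityTheory in
lemma integral_abs_le_sqrt_integral_sq {α : Type*} [MeasurableSpace α] {μ : Measure α}
    [IsProbabilityMeasure μ] {f : α → ℝ} (hf : MemLp f 2 μ) :
    ∫ x, |f x| ∂μ ≤ √(∫ x, f x ^ 2 ∂μ) := by
  have h := variance_nonneg (|f|) μ
  rw [variance_eq_sub hf.abs] at h
  refine Real.le_sqrt_of_sq_le ?_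
  simpa only [Pi.pow_apply, Pi.abs_apply, sq_abs, sub_nonneg] using h

lemma integral_sq_sub_eq {α : Type*} [MeasurableSpace α] {μ : Measure α} {y f : α → ℝ}
    (hy : Integrable (fun x => y x ^ 2) μ) (hfy : Integrable (fun x => f x * y x) μ)
    (hf : Integrable (fun x => f x ^ 2) μ) :
    ∫ x, (y x - f x) ^ 2 ∂μ =
      ∫ x, y x ^ 2 ∂μ - (2 * ∫ x, f x * y x ∂μ - ∫ x, f x ^ 2 ∂μ) := by
  have hexp : (fun x => (y x - f x) ^ 2) = fun x => y x ^ 2 - 2 * (f x * y x) + f x ^ 2 := by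
    funext x; ring
  have h2fy := hfy.const_mul 2
  rw [hexp, integral_add (f := fun x => y x ^ 2 - 2 * (f x * y x)) (hy.sub h2fy) hf,
    integral_sub hy h2fy, integral_const_mul]
  ring

section CondExp

variable {α : Type*} {m m₀ : MeasurableSpace α} {μ : Measure α} [IsFiniteMeasure μ]

lemma integral_mul_sub_eq_zero_of_condExp (hm : m ≤ m₀) {g y a : α → ℝ}
    (hg : StronglyMeasurable[m] g) (hy : Integrable y μ) (ha : StronglyMeasurable[m] a)
    (hai : Integrable a μ) (hgy : Integrable (g * (y - a)) μ) (hya : μ[y | m] =ᵐ[μ] a) :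
    ∫ x, g x * (y x - a x) ∂μ = 0 := by
  have hres : μ[y - a | m] =ᵐ[μ] 0 := by
    filter_upwards [condExp_sub hy hai m, hya] with x hsub hyx
    rw [hsub, Pi.sub_apply, hyx, condExp_of_stronglyMeasurable hm ha hai, Pi.zero_apply, sub_self]
  calc ∫ x, g x * (y x - a x) ∂μ = ∫ x, (μ[g * (y - a) | m]) x ∂μ :=
        (integral_condExp hm).symm
    _ = ∫ x, (0 : ℝ) ∂μ := by
        refine integral_congr_ae ?_
        filter_upwards [condExp_mul_of_stronglyMeasurable_left hg hgy (hy.sub hai), hres]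
          with x hpull hx
        rw [hpull, Pi.mul_apply, hx, Pi.zero_apply, mul_zero]
    _ = 0 := integral_zero _ _

lemma integral_sq_sub_eq_add_of_condExp (hm : m ≤ m₀) {y a b : α → ℝ} (hy : MemLp y 2 μ)
    (ha : StronglyMeasurable[m] a) (ha2 : MemLp a 2 μ) (hb : StronglyMeasurable[m] b)
    (hb2 : MemLp b 2 μ) (hya : μ[y | m] =ᵐ[μ] a) :
    ∫ x, (y x - b x) ^ 2 ∂μ = ∫ x, (y x - a x) ^ 2 ∂μ + ∫ x, (a x - b x) ^ 2 ∂μ := by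
  have hcross : Integrable (fun x => (a x - b x) * (y x - a x)) μ :=
    (ha2.sub hb2).integrable_mul (hy.sub ha2)
  have horth := integral_mul_sub_eq_zero_of_condExp hm (ha.sub hb) (hy.integrable one_le_two) ha
    (ha2.integrable one_le_two) hcross hya
  have hya2 := (memLp_two_iff_integrable_sq (hy.sub ha2).1).mp (hy.sub ha2)
  have hab2 := (memLp_two_iff_integrable_sq (ha2.sub hb2).1).mp (ha2.sub hb2)
  have hexp : (fun x => (y x - b x) ^ 2) =
      fun x => (y x - a x) ^ 2 + 2 * ((a x - b x) * (y x - a x)) + (a x - b x) ^ 2 := by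
    funext x; ring
  simp only [Pi.sub_apply] at horth hya2 hab2
  rw [hexp, integral_add (f := fun x => (y x - a x) ^ 2 + 2 * ((a x - b x) * (y x - a x)))
    (hya2.add (hcross.const_mul 2)) hab2, integral_add hya2 (hcross.const_mul 2),
    integral_const_mul, horth, mul_zero, add_zero]

lemma integral_abs_condExp_sub_le {m' : MeasurableSpace α} (hm' : m' ≤ m) (hm : m ≤ m₀)
    {y a b : α → ℝ} (hb : StronglyMeasurable[m'] b) (hbi : Integrable b μ)
    (hya : μ[y | m] =ᵐ[μ] a) :
    ∫ x, |μ[y | m'] x - b x| ∂μ ≤ ∫ x, |a x - b x| ∂μ := by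
  have hai : Integrable a μ := (integrable_condExp (m := m) (f := y)).congr hya
  have htower : μ[y | m'] - b =ᵐ[μ] μ[a - b | m'] := by
    filter_upwards [(condExp_condExp_of_le (f := y) hm' hm).symm, condExp_congr_ae (m := m') hya,
      condExp_sub hai hbi m'] with x htow hcongr hsub
    rw [Pi.sub_apply, htow, hcongr, hsub, Pi.sub_apply,
      condExp_of_stronglyMeasurable (hm'.trans hm) hb hbi]
  calc ∫ x, |μ[y | m'] x - b x| ∂μ = ∫ x, |μ[a - b | m'] x| ∂μ :=
        integral_congr_ae (htower.mono fun x hx => congrArg abs hx)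
    _ ≤ ∫ x, |(a - b) x| ∂μ := integral_abs_condExp_le _
    _ = ∫ x, |a x - b x| ∂μ := rfl

end CondExp

lemma abs_sub_le_of_abs_sub_le_half {a a' b b' r : ℝ} (ha : |b - a| ≤ r / 2)
    (ha' : |b' - a'| ≤ r / 2) (hb : |b - b'| ≤ r) : |a - a'| ≤ 2 * r := by
  rw [abs_le] at *
  constructor <;> linarith [ha.1, ha.2, ha'.1, ha'.2, hb.1, hb.2]

section FAIRM

variable {p q : ℕ} {E : Type} {P : E → Measure ((Fin p → ℝ) × ℝ)} {Etr : Finset E}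
  {FΦ : Set ((Fin p → ℝ) → (Fin q → ℝ))} {Fw : Set ((Fin q → ℝ) → ℝ)}
  {n : E → ℕ} {X : (e : E) → Fin (n e) → (Fin p → ℝ)} {Y : (e : E) → Fin (n e) → ℝ}
  {ρ1 ρ2 : ℝ}

lemma sigmaGen_comp_le {β γ : Type*} [MeasurableSpace β] [MeasurableSpace γ]
    (Z : (Fin p → ℝ) × ℝ → β) {g : β → γ} (hg : Measurable g) :
    sigmaGen (fun z => g (Z z)) ≤ sigmaGen Z :=
  (hg.comp (comap_measurable Z)).comap_le

lemma stronglyMeasurable_sigmaGen_comp {β : Type*} [MeasurableSpace β]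
    (Z : (Fin p → ℝ) × ℝ → β) {g : β → ℝ} (hg : Measurable g) :
    StronglyMeasurable[sigmaGen Z] (fun z => g (Z z)) :=
  (hg.comp (comap_measurable Z)).stronglyMeasurable

lemma Regular.memLp_comp (hreg : Regular P FΦ Fw) {Φ : (Fin p → ℝ) → (Fin q → ℝ)} (hΦ : Φ ∈ FΦ)
    {u : (Fin q → ℝ) → ℝ} (hu : u ∈ Fw) (e : E) :
    MemLp (fun z : (Fin p → ℝ) × ℝ => u (Φ z.1)) 2 (P e) :=
  (memLp_two_iff_integrable_sq ((hreg.2.1 u hu).comp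
    ((hreg.1 Φ hΦ).comp measurable_fst)).aestronglyMeasurable).mpr (hreg.2.2.2.2 Φ hΦ u hu e).2.1

lemma mem_invSet_of_mem_empFeas (hdev : UnifDev P Etr FΦ Fw n X Y ρ1 ρ2)
    (hdiv : EmpDiv P Etr FΦ Fw ρ1 ρ2) {Φ : (Fin p → ℝ) → (Fin q → ℝ)}
    (hΦ : Φ ∈ EmpFeas Etr FΦ Fw n X Y ρ1 ρ2) : Φ ∈ InvSet P FΦ Fw := by
  by_contra hnot
  obtain ⟨u, hu, e, he, e', he', hgap⟩ := hdiv Φ hΦ.1 hnot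
  obtain ⟨hcov, hsq⟩ := hdev u hu Φ hΦ.1 e he
  obtain ⟨hcov', hsq'⟩ := hdev u hu Φ hΦ.1 e' he'
  obtain ⟨hcovFeas, hsqFeas⟩ := hΦ.2 u hu e he e' he'
  rcases hgap with hgap | hgap
  · exact (abs_sub_le_of_abs_sub_le_half hcov hcov' hcovFeas).not_gt hgap
  · exact (abs_sub_le_of_abs_sub_le_half hsq hsq' hsqFeas).not_gt hgap

lemma sum_sq_sub_eq {e : E} (he : n e ≠ 0) (Φ : (Fin p → ℝ) → (Fin q → ℝ))
    (u : (Fin q → ℝ) → ℝ) :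
    ∑ i, (Y e i - u (Φ (X e i))) ^ 2 =
      ∑ i, Y e i ^ 2 - n e * (2 * empCov n X Y Φ u e - empSq n X Φ u e) := by
  have hexp : ∀ i, (Y e i - u (Φ (X e i))) ^ 2 =
      Y e i ^ 2 - 2 * (u (Φ (X e i)) * Y e i) + u (Φ (X e i)) ^ 2 := fun i => by ring
  simp only [hexp, Finset.sum_add_distrib, Finset.sum_sub_distrib, ← Finset.mul_sum, empCov,
    empSq]
  field_simp
  ring

/- The gain `2 E[u(Φ x) y] - E[u(Φ x)²] = E[y²] - R(u ∘ Φ)` of a predictor over `0`: differences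
of gains are differences of risks, and gains are built from the moments that invariance fixes. -/
lemma IsEmpFairmSol.exists_mem_gain_sub_le {what : (Fin q → ℝ) → ℝ}
    {Φhat : (Fin p → ℝ) → (Fin q → ℝ)} (hhat : IsEmpFairmSol Etr FΦ Fw n X Y ρ1 ρ2 what Φhat)
    (hEtr : Etr.Nonempty) (hn : ∀ e ∈ Etr, 0 < n e) (hdev : UnifDev P Etr FΦ Fw n X Y ρ1 ρ2)
    {w : (Fin q → ℝ) → ℝ} (hw : w ∈ Fw) :
    ∃ e ∈ Etr, (2 * covT P Φhat w e - sqT P Φhat w e) -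
      (2 * covT P Φhat what e - sqT P Φhat what e) ≤ 2 * ρ1 + ρ2 := by
  obtain ⟨hwhat, hfeas, hmin⟩ := hhat
  obtain ⟨e, he, hle⟩ := Finset.exists_le_of_sum_le hEtr (hmin w hw Φhat hfeas)
  have hne : 0 < (n e : ℝ) := Nat.cast_pos.mpr (hn e he)
  rw [sum_sq_sub_eq (hn e he).ne', sum_sq_sub_eq (hn e he).ne'] at hle
  have hemp : 2 * empCov n X Y Φhat w e - empSq n X Φhat w e ≤
      2 * empCov n X Y Φhat what e - empSq n X Φhat what e :=
    le_of_mul_le_mul_left (by linarith) hne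
  obtain ⟨hcov, hsq⟩ := hdev w hw Φhat hfeas.1 e he
  obtain ⟨hcov', hsq'⟩ := hdev what hwhat Φhat hfeas.1 e he
  rw [abs_le] at hcov hsq hcov' hsq'
  exact ⟨e, he, by linarith [hcov.1, hsq.2, hcov'.2, hsq'.1]⟩

lemma integral_sq_comp_sub_eq_gain_sub (hreg : Regular P FΦ Fw) {e : E}
    [IsProbabilityMeasure (P e)] {Φ : (Fin p → ℝ) → (Fin q → ℝ)} (hΦ : Φ ∈ FΦ)
    {w u : (Fin q → ℝ) → ℝ} (hw : w ∈ Fw) (hu : u ∈ Fw)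
    (hcond : (P e)[fun z => z.2 | sigmaGen (fun z => Φ z.1)] =ᵐ[P e] fun z => w (Φ z.1)) :
    ∫ z, (w (Φ z.1) - u (Φ z.1)) ^ 2 ∂(P e) =
      (2 * covT P Φ w e - sqT P Φ w e) - (2 * covT P Φ u e - sqT P Φ u e) := by
  obtain ⟨hΦm, hwm, hy, -, hint⟩ := id hreg
  have hy2 := (memLp_two_iff_integrable_sq (hy e).1).mp (hy e)
  have hpyth := integral_sq_sub_eq_add_of_condExp ((hΦm Φ hΦ).comp measurable_fst).comap_le
    (hy e) (stronglyMeasurable_sigmaGen_comp (fun z => Φ z.1) (hwm w hw))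
    (hreg.memLp_comp hΦ hw e) (stronglyMeasurable_sigmaGen_comp (fun z => Φ z.1) (hwm u hu))
    (hreg.memLp_comp hΦ hu e) hcond
  rw [integral_sq_sub_eq hy2 (hint Φ hΦ u hu e).1 (hint Φ hΦ u hu e).2.1,
    integral_sq_sub_eq hy2 (hint Φ hΦ w hw e).1 (hint Φ hΦ w hw e).2.1] at hpyth
  unfold covT sqT
  linarith

end FAIRM

theorem stmt14_general {p q : ℕ} {E : Type}
    (Etr : Finset E) (hEtr : Etr.Nonempty)
    (P : E → Measure ((Fin p → ℝ) × ℝ)) [∀ e, IsProbabilityMeasure (P e)]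
    (FΦ : Set ((Fin p → ℝ) → (Fin q → ℝ))) (Fw : Set ((Fin q → ℝ) → ℝ))
    (hreg : Regular P FΦ Fw)
    (n : E → ℕ) (hn : ∀ e ∈ Etr, 0 < n e)
    (X : (e : E) → Fin (n e) → (Fin p → ℝ)) (Y : (e : E) → Fin (n e) → ℝ)
    (ρ1 ρ2 : ℝ)
    (hdev : UnifDev P Etr FΦ Fw n X Y ρ1 ρ2)
    (hdiv : EmpDiv P Etr FΦ Fw ρ1 ρ2)
    (hcmr : CMR P FΦ Fw)
    (what : (Fin q → ℝ) → ℝ) (Φhat : (Fin p → ℝ) → (Fin q → ℝ))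
    (hhat : IsEmpFairmSol Etr FΦ Fw n X Y ρ1 ρ2 what Φhat) :
    ∀ e : E,
      ∫ z, |((P e)[(fun z' : (Fin p → ℝ) × ℝ => z'.2) |
            sigmaGen (fun z' => what (Φhat z'.1))]) z - what (Φhat z.1)| ∂(P e) ≤
        Real.sqrt (4 * ρ1 + 2 * ρ2) := by
  intro e
  have hΦ := hhat.2.1.1
  have hwm : Measurable what := hreg.2.1 what hhat.1
  have hinv : Φhat ∈ InvSet P FΦ Fw := mem_invSet_of_mem_empFeas hdev hdiv hhat.2.1
  obtain ⟨wΦ, hwΦ, hcond⟩ := hcmr Φhat hinv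
  obtain ⟨e₀, -, hgain⟩ := hhat.exists_mem_gain_sub_le hEtr hn hdev hwΦ
  have hgain_e : (2 * covT P Φhat wΦ e - sqT P Φhat wΦ e) -
      (2 * covT P Φhat what e - sqT P Φhat what e) ≤ 2 * ρ1 + ρ2 := by
    rw [(hinv.2 wΦ hwΦ e e₀).1, (hinv.2 wΦ hwΦ e e₀).2, (hinv.2 what hhat.1 e e₀).1,
      (hinv.2 what hhat.1 e e₀).2]
    exact hgain
  have hL2 := integral_sq_comp_sub_eq_gain_sub hreg hΦ hwΦ hhat.1 (hcond e)
  have hL2_nonneg : 0 ≤ ∫ z, (wΦ (Φhat z.1) - what (Φhat z.1)) ^ 2 ∂(P e) :=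
    integral_nonneg fun _ => sq_nonneg _
  calc _ ≤ ∫ z, |wΦ (Φhat z.1) - what (Φhat z.1)| ∂(P e) :=
        integral_abs_condExp_sub_le (sigmaGen_comp_le (fun z => Φhat z.1) hwm)
          ((hreg.1 Φhat hΦ).comp measurable_fst).comap_le
          (stronglyMeasurable_sigmaGen_comp (fun z => what (Φhat z.1)) measurable_id)
          ((hreg.memLp_comp hΦ hhat.1 e).integrable one_le_two) (hcond e)
    _ ≤ √(∫ z, (wΦ (Φhat z.1) - what (Φhat z.1)) ^ 2 ∂(P e)) :=
        integral_abs_le_sqrt_integral_sq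
          ((hreg.memLp_comp hΦ hwΦ e).sub (hreg.memLp_comp hΦ hhat.1 e))
    _ ≤ √(4 * ρ1 + 2 * ρ2) := Real.sqrt_le_sqrt (by linarith)

/-- multi-calibration of empirical FAIRM. Under the uniform-deviation
hypothesis, the empirical diversity condition, `I* ≠ ∅` and conditional-mean
realizability, every empirical FAIRM solution has multi-calibration error at most
`√(4ρ₁ + 2ρ₂)` in every environment. -/
theorem stmt14 {p q : ℕ} {E : Type} [Fintype E] [Nonempty E]
    (Etr : Finset E) (hEtr : Etr.Nonempty)
    (P : E → Measure ((Fin p → ℝ) × ℝ)) [∀ e, IsProbabilityMeasure (P e)]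
    (FΦ : Set ((Fin p → ℝ) → (Fin q → ℝ))) (Fw : Set ((Fin q → ℝ) → ℝ))
    (hreg : Regular P FΦ Fw)
    (n : E → ℕ) (hn : ∀ e ∈ Etr, 0 < n e)
    (X : (e : E) → Fin (n e) → (Fin p → ℝ)) (Y : (e : E) → Fin (n e) → ℝ)
    (ρ1 ρ2 : ℝ) (hρ1 : 0 < ρ1) (hρ2 : 0 < ρ2)
    (hdev : UnifDev P Etr FΦ Fw n X Y ρ1 ρ2)
    (hdiv : EmpDiv P Etr FΦ Fw ρ1 ρ2)
    (hne : (InvSet P FΦ Fw).Nonempty)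
    (hcmr : CMR P FΦ Fw)
    (what : (Fin q → ℝ) → ℝ) (Φhat : (Fin p → ℝ) → (Fin q → ℝ))
    (hhat : IsEmpFairmSol Etr FΦ Fw n X Y ρ1 ρ2 what Φhat) :
    ∀ e : E,
      ∫ z, |((P e)[(fun z' : (Fin p → ℝ) × ℝ => z'.2) |
            sigmaGen (fun z' => what (Φhat z'.1))]) z - what (Φhat z.1)| ∂(P e) ≤
        Real.sqrt (4 * ρ1 + 2 * ρ2) :=
  stmt14_general Etr hEtr P FΦ Fw hreg n hn X Y ρ1 ρ2 hdev hdiv hcmr what Φhat hhat
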